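/- Subcritical stability of the linearized infectious subsystem: let B be an n × n complex matrix and T_E, T_I > 0. If every eigenvalue λ of B satisfies |λ| < 1/T_I (equivalently, the spectral radius of T_I B is less than 1), then every eigenvalue μ of the block matrix A = [[−(1/T_E) I_n, B], [(1/T_E) I_n, −(1/T_I) I_n]] has strictly negative real part. -/

import Mathlib

/-!
If `(x, y)` is an eigenvector of `A` for `μ`, the two block rows give `B y = (μ + 1/T_E) x` and
`(1/T_E) x = (μ + 1/T_I) y`, so `y ≠ 0` is an eigenvector of `B` for
`T_E (μ + 1/T_E)(μ + 1/T_I)`. When `Re μ ≥ 0`, each factor `μ + r` with `r > 0` has modulus at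
least `r`, so this eigenvalue of `B` has modulus at least `1/T_I`.
-/

namespace Matrix

variable {K n : Type*} [Field K] [Fintype n] [DecidableEq n]

theorem mem_spectrum_iff_exists_mulVec_eq_smul {A : Matrix n n K} {μ : K} :
    μ ∈ spectrum K A ↔ ∃ v ≠ 0, A *ᵥ v = μ • v := by
  rw [← spectrum_toLin', ← Module.End.hasEigenvalue_iff_mem_spectrum]
  constructor
  · intro h
    obtain ⟨v, hv⟩ := h.exists_hasEigenvector
    exact ⟨v, hv.2, by simpa using hv.apply_eq_smul⟩
  · rintro ⟨v, hv0, hv⟩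
    exact Module.End.hasEigenvalue_of_hasEigenvector
      ⟨by simpa [Module.End.mem_eigenspace_iff] using hv, hv0⟩

theorem mem_spectrum_of_mem_spectrum_fromBlocks_smul_one {a b c μ : K} {B : Matrix n n K}
    (hc : c ≠ 0)
    (hμ : μ ∈ spectrum K
      (fromBlocks ((-a) • (1 : Matrix n n K)) B (c • (1 : Matrix n n K)) ((-b) • 1))) :
    (μ + a) * (μ + b) / c ∈ spectrum K B := by
  obtain ⟨v, hv0, hv⟩ := mem_spectrum_iff_exists_mulVec_eq_smul.mp hμ
  obtain ⟨x, y, rfl⟩ : ∃ x y, v = Sum.elim x y := ⟨_, _, (Sum.elim_comp_inl_inr v).symm⟩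
  rw [fromBlocks_mulVec] at hv
  have hx : -a • x + B *ᵥ y = μ • x := by
    simpa only [Sum.elim_comp_inl, Sum.elim_comp_inr, smul_mulVec, one_mulVec, Pi.smul_comp]
      using congrArg (· ∘ Sum.inl) hv
  have hy : c • x + -b • y = μ • y := by
    simpa only [Sum.elim_comp_inl, Sum.elim_comp_inr, smul_mulVec, one_mulVec, Pi.smul_comp]
      using congrArg (· ∘ Sum.inr) hv
  have hBy : B *ᵥ y = (μ + a) • x := by linear_combination (norm := module) hx
  have hcx : c • x = (μ + b) • y := by linear_combination (norm := module) hy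
  have hy0 : y ≠ 0 := by
    rintro rfl
    rw [smul_zero, smul_eq_zero_iff_right hc] at hcx
    exact hv0 (by rw [hcx, Sum.elim_zero_zero])
  refine mem_spectrum_iff_exists_mulVec_eq_smul.mpr ⟨y, hy0, ?_⟩
  have hcBy : c • (B *ᵥ y) = ((μ + a) * (μ + b)) • y := by
    rw [hBy, smul_comm, hcx, smul_smul]
  rw [div_eq_inv_mul, ← smul_smul, ← hcBy, inv_smul_smul₀ hc]

end Matrix

namespace Complex

theorem mul_le_norm_add_mul_add {a b : ℝ} {μ : ℂ} (ha : 0 ≤ a) (hb : 0 ≤ b)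
    (hμ : 0 ≤ μ.re) : a * b ≤ ‖(μ + a) * (μ + b)‖ := by
  have le_norm_add {r : ℝ} (hr : 0 ≤ r) : r ≤ ‖μ + r‖ := by
    have := (μ + r).re_le_norm
    simp only [add_re, ofReal_re] at this
    linarith
  calc a * b ≤ ‖μ + a‖ * ‖μ + b‖ :=
        mul_le_mul (le_norm_add ha) (le_norm_add hb) hb (norm_nonneg _)
    _ = ‖(μ + a) * (μ + b)‖ := (norm_mul _ _).symm

end Complex

/-- Subcritical stability of the linearized infectious subsystem: let `B` be an
`n × n` complex matrix and `T_E, T_I > 0`.  If every eigenvalue `λ` of `B`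
satisfies `|λ| < 1/T_I`, then every eigenvalue `μ` of the block matrix
`A = [[−(1/T_E) I, B], [(1/T_E) I, −(1/T_I) I]]` has strictly negative real part. -/
theorem block_matrix_subcritical_stability (n : ℕ) (B : Matrix (Fin n) (Fin n) ℂ)
    (TE TI : ℝ) (hTE : 0 < TE) (hTI : 0 < TI)
    (hB : ∀ lam ∈ spectrum ℂ B, ‖lam‖ < 1 / TI) :
    ∀ μ ∈ spectrum ℂ
      (Matrix.fromBlocks
        ((-(1 / (TE : ℂ))) • (1 : Matrix (Fin n) (Fin n) ℂ)) B
        ((1 / (TE : ℂ)) • (1 : Matrix (Fin n) (Fin n) ℂ))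
        ((-(1 / (TI : ℂ))) • (1 : Matrix (Fin n) (Fin n) ℂ))),
      μ.re < 0 := by
  intro μ hμ
  have hTE' : (1 / TE : ℂ) ≠ 0 := one_div_ne_zero (Complex.ofReal_ne_zero.mpr hTE.ne')
  have hnorm := hB _ (Matrix.mem_spectrum_of_mem_spectrum_fromBlocks_smul_one hTE' hμ)
  by_contra! hre
  have hprod :=
    Complex.mul_le_norm_add_mul_add (one_div_pos.mpr hTE).le (one_div_pos.mpr hTI).le hre
  push_cast at hprod
  rw [norm_div, div_lt_iff₀ (norm_pos_iff.mpr hTE'), norm_div, norm_one, Complex.norm_real,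
    Real.norm_of_nonneg hTE.le] at hnorm
  linarith
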